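/- arXiv:cs/0603094 — 2 statements merged into one kernel-verified Lean document; each statement's English description precedes it below -/
import Mathlib

section
/- If (δ, δ̃) is a solution of the fixed-point system δ = f(δ, δ̃, Q̃), δ̃ = f̃(δ, δ̃, Q̃), then the partial derivatives of V(κ, κ̃, Q̃) with respect to κ and κ̃ vanish at (δ, δ̃): ∂V/∂κ(δ, δ̃, Q̃) = 0 and ∂V/∂κ̃(δ, δ̃, Q̃) = 0. -/
/-!
By Sylvester's identity `det (I + G Q̃ G) = det (I + Q̃ G²)`, and
`G² = κT + σ⁻² Aᴴ (I + κ̃R)⁻¹ A` is affine in `κ`; so for fixed `κ̃` the first term of `V` is the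
log-determinant of an affine matrix function of `κ`, with derivative `Re Tr[(I + Q̃G²)⁻¹ Q̃T]`.
Moving `Q̃^{1/2}` through the inverse (`U (I + VU)⁻¹ = (I + UV)⁻¹ U`) shows that this trace is
`σ²n f̃`, which cancels the derivative `σ²nκ̃` of the last term at a fixed point.

For `κ̃`, the two Schur complements of `[[I + κQ̃T, σ⁻²Q̃Aᴴ], [-A, I + κ̃R]]` give
`det (I + Q̃G²) det (I + κ̃R) = det (I + κQ̃T) det Z` with `Z = I + κ̃R + σ⁻² A (I + κQ̃T)⁻¹ Q̃ Aᴴ`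
affine in `κ̃`, and the same computation identifies the derivative of `log det Z` with `σ²n f`.
-/

open Matrix
open scoped ComplexOrder Classical

/-- Positive semidefinite square root (junk value `0` off the PSD cone). -/
noncomputable def psqrt {n : ℕ} (M : Matrix (Fin n) (Fin n) ℂ) : Matrix (Fin n) (Fin n) ℂ :=
  if h : M.PosSemidef then (h.1.eigenvectorUnitary : Matrix (Fin n) (Fin n) ℂ) *
    diagonal (((↑) : ℝ → ℂ) ∘ (√·) ∘ h.1.eigenvalues) *
    (star h.1.eigenvectorUnitary : Matrix (Fin n) (Fin n) ℂ) else 0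

/-- `T(Q̃) = Q̃^{1/2} T Q̃^{1/2}`. -/
noncomputable def TQ {n : ℕ} (T Q : Matrix (Fin n) (Fin n) ℂ) : Matrix (Fin n) (Fin n) ℂ :=
  psqrt Q * T * psqrt Q

/-- `f(κ,κ̃) = (1/n)·Tr[R(σ²(I + κ̃R) + A Q̃^{1/2}(I + κ T(Q̃))⁻¹ Q̃^{1/2} Aᴴ)⁻¹]`. -/
noncomputable def fFP {N n : ℕ} (σ2 : ℝ) (A : Matrix (Fin N) (Fin n) ℂ)
    (R : Matrix (Fin N) (Fin N) ℂ) (T Q : Matrix (Fin n) (Fin n) ℂ)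
    (κ κt : ℝ) : ℝ :=
  ((1 : ℝ) / n) *
    ((R * (((σ2 : ℂ)) • (1 + ((κt : ℂ)) • R) +
        A * psqrt Q * (1 + ((κ : ℂ)) • TQ T Q)⁻¹ * psqrt Q * Aᴴ)⁻¹).trace).re

/-- `f̃(κ,κ̃) = (1/n)·Tr[T(Q̃)(σ²(I + κT(Q̃)) + Q̃^{1/2} Aᴴ (I + κ̃R)⁻¹ A Q̃^{1/2})⁻¹]`. -/
noncomputable def fFPt {N n : ℕ} (σ2 : ℝ) (A : Matrix (Fin N) (Fin n) ℂ)
    (R : Matrix (Fin N) (Fin N) ℂ) (T Q : Matrix (Fin n) (Fin n) ℂ)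
    (κ κt : ℝ) : ℝ :=
  ((1 : ℝ) / n) *
    ((TQ T Q * (((σ2 : ℂ)) • (1 + ((κ : ℂ)) • TQ T Q) +
        psqrt Q * Aᴴ * (1 + ((κt : ℂ)) • R)⁻¹ * A * psqrt Q)⁻¹).trace).re

/-- `G(κ,κ̃) = [κT + (1/σ²) Aᴴ(I + κ̃R)⁻¹A]^{1/2}`. -/
noncomputable def Gmat {N n : ℕ} (σ2 : ℝ) (A : Matrix (Fin N) (Fin n) ℂ)
    (R : Matrix (Fin N) (Fin N) ℂ) (T : Matrix (Fin n) (Fin n) ℂ)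
    (κ κt : ℝ) : Matrix (Fin n) (Fin n) ℂ :=
  psqrt (((κ : ℂ)) • T + ((σ2 : ℂ))⁻¹ • (Aᴴ * (1 + ((κt : ℂ)) • R)⁻¹ * A))

/-- `V(κ,κ̃,Q̃) = log det[I + G(κ,κ̃)Q̃G(κ,κ̃)] + log det[I + κ̃R] − σ²nκκ̃`. -/
noncomputable def Vfun {N n : ℕ} (σ2 : ℝ) (A : Matrix (Fin N) (Fin n) ℂ)
    (R : Matrix (Fin N) (Fin N) ℂ) (T Q : Matrix (Fin n) (Fin n) ℂ)
    (κ κt : ℝ) : ℝ :=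
  Real.log ((1 + Gmat σ2 A R T κ κt * Q * Gmat σ2 A R T κ κt).det.re) +
    Real.log ((1 + ((κt : ℂ)) • R).det.re) - σ2 * n * κ * κt

namespace Complex

theorem log_re_mul_of_pos {a b : ℂ} (ha : 0 < a) (hb : 0 < b) :
    Real.log (a * b).re = Real.log a.re + Real.log b.re := by
  rw [mul_re, ← (pos_iff.mp hb).2, mul_zero, sub_zero,
    Real.log_mul (pos_iff.mp ha).1.ne' (pos_iff.mp hb).1.ne']

end Complex

namespace Matrix

section CommRing

variable {m k α : Type*} [Fintype m] [DecidableEq m] [Fintype k] [DecidableEq k] [CommRing α]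

/-- No invertibility is needed: `1 + U * V` and `1 + V * U` are singular together, and then both
inverses are `0`. -/
theorem mul_inv_one_add_mul_comm (U : Matrix m k α) (V : Matrix k m α) :
    U * (1 + V * U)⁻¹ = (1 + U * V)⁻¹ * U := by
  by_cases h : IsUnit (1 + U * V).det
  · have h' : IsUnit (1 + V * U).det := by rwa [det_one_add_mul_comm]
    have hcomm : (1 + U * V) * U = U * (1 + V * U) := by
      simp only [Matrix.add_mul, Matrix.mul_add, Matrix.one_mul, Matrix.mul_one, Matrix.mul_assoc]
    calc U * (1 + V * U)⁻¹ = (1 + U * V)⁻¹ * ((1 + U * V) * U) * (1 + V * U)⁻¹ := by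
          rw [nonsing_inv_mul_cancel_left _ _ h]
      _ = (1 + U * V)⁻¹ * U := by
          rw [hcomm, Matrix.mul_assoc, Matrix.mul_assoc, mul_nonsing_inv _ h', Matrix.mul_one]
  · have h' : ¬IsUnit (1 + V * U).det := by rwa [det_one_add_mul_comm]
    rw [nonsing_inv_apply_not_isUnit _ h, nonsing_inv_apply_not_isUnit _ h', Matrix.mul_zero,
      Matrix.zero_mul]

theorem det_add_mul_inv_mul_mul_det {P : Matrix m m α} {D : Matrix k k α}
    (hP : IsUnit P.det) (hD : IsUnit D.det) (U : Matrix m k α) (W : Matrix k m α) :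
    (P + U * D⁻¹ * W).det * D.det = P.det * (D + W * P⁻¹ * U).det := by
  have hcomm : (1 + D⁻¹ * W * P⁻¹ * U).det = (1 + P⁻¹ * U * D⁻¹ * W).det := by
    simpa only [Matrix.mul_assoc] using det_one_add_mul_comm (D⁻¹ * W) (P⁻¹ * U)
  rw [Matrix.mul_assoc U, det_add_mul _ _ hP, Matrix.mul_assoc W, det_add_mul _ _ hD, hcomm]
  ring

end CommRing

theorem inv_smul₀ {m K : Type*} [Fintype m] [DecidableEq m] [Field K] (c : K) (A : Matrix m m K) :
    (c • A)⁻¹ = c⁻¹ • A⁻¹ := by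
  rcases eq_or_ne c 0 with rfl | hc
  · simp
  by_cases h : IsUnit A.det
  · exact inv_eq_left_inv <| by
      rw [smul_mul_smul_comm, inv_mul_cancel₀ hc, one_smul, nonsing_inv_mul _ h]
  · have h' : ¬IsUnit (c • A).det := by simpa [det_smul, hc] using h
    rw [nonsing_inv_apply_not_isUnit _ h, nonsing_inv_apply_not_isUnit _ h', smul_zero]

section Deriv

variable {m 𝕜 : Type*} [Fintype m] [DecidableEq m] [NontriviallyNormedField 𝕜]

theorem hasDerivAt_det_one_add_smul (M : Matrix m m 𝕜) :
    HasDerivAt (fun z : 𝕜 => (1 + z • M).det) M.trace 0 := by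
  set p : Polynomial 𝕜 := (1 + (Polynomial.X : Polynomial 𝕜) • M.map Polynomial.C).det
  have hp : (fun z : 𝕜 => (1 + z • M).det) = fun z => p.eval z := by
    funext z
    simp [p, eval_det, ← smul_eq_mul_diagonal]
  rw [hp, ← derivative_det_one_add_X_smul]
  exact p.hasDerivAt 0

theorem hasDerivAt_det_add_smul (X Y : Matrix m m 𝕜) (w : 𝕜) (h : IsUnit (X + w • Y).det) :
    HasDerivAt (fun z : 𝕜 => (X + z • Y).det)
      ((X + w • Y).det * ((X + w • Y)⁻¹ * Y).trace) w := by
  set X₁ := X + w • Y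
  have hfactor : ∀ z : 𝕜, X + z • Y = X₁ * (1 + (z - w) • (X₁⁻¹ * Y)) := fun z => by
    rw [Matrix.mul_add, Matrix.mul_one, Matrix.mul_smul, mul_nonsing_inv_cancel_left _ _ h]
    simp only [X₁, sub_smul]
    abel
  simp_rw [hfactor, det_mul]
  have h₀ : HasDerivAt (fun z : 𝕜 => (1 + z • (X₁⁻¹ * Y)).det) (X₁⁻¹ * Y).trace (w - w) := by
    simpa using hasDerivAt_det_one_add_smul (X₁⁻¹ * Y)
  exact (h₀.comp_sub_const w w).const_mul X₁.det

end Deriv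

theorem hasDerivAt_log_re_det_add_smul {m : Type*} [Fintype m] [DecidableEq m]
    (X Y : Matrix m m ℂ) (t : ℝ) (h : 0 < (X + (t : ℂ) • Y).det) :
    HasDerivAt (fun s : ℝ => Real.log (X + (s : ℂ) • Y).det.re)
      ((X + (t : ℂ) • Y)⁻¹ * Y).trace.re t := by
  have hdet := (hasDerivAt_det_add_smul X Y t (isUnit_iff_ne_zero.mpr h.ne')).real_of_complex
  convert hdet.log (Complex.pos_iff.mp h).1.ne' using 1
  rw [Complex.mul_re, ← (Complex.pos_iff.mp h).2, zero_mul, sub_zero,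
    mul_div_cancel_left₀ _ (Complex.pos_iff.mp h).1.ne']

theorem posDef_one_add_ofReal_smul {m : Type*} [Fintype m] [DecidableEq m]
    {R : Matrix m m ℂ} (hR : R.PosSemidef) {t : ℝ} (ht : 0 ≤ t) : (1 + (t : ℂ) • R).PosDef :=
  PosDef.add_posSemidef PosDef.one (hR.smul (by exact_mod_cast ht))

end Matrix

section psqrt

variable {n : ℕ} {Q M : Matrix (Fin n) (Fin n) ℂ}

theorem psqrt_mul_self (hM : M.PosSemidef) : psqrt M * psqrt M = M := by
  rw [psqrt, dif_pos hM]
  have hU : (star hM.1.eigenvectorUnitary : Matrix (Fin n) (Fin n) ℂ) *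
      (hM.1.eigenvectorUnitary : Matrix (Fin n) (Fin n) ℂ) = 1 := Unitary.coe_star_mul_self _
  conv_rhs => rw [hM.1.spectral_theorem, Unitary.conjStarAlgAut_apply]
  rw [show ∀ U D S : Matrix (Fin n) (Fin n) ℂ, U * D * S * (U * D * S) = U * (D * (S * U) * D) * S
    from fun U D S => by simp only [Matrix.mul_assoc], hU, Matrix.mul_one, diagonal_mul_diagonal]
  congr 3
  funext i
  simp only [Function.comp_apply]
  rw [← Complex.ofReal_mul, Real.mul_self_sqrt (hM.eigenvalues_nonneg i)]
  rfl

theorem posSemidef_psqrt (hM : M.PosSemidef) : (psqrt M).PosSemidef := by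
  rw [psqrt, dif_pos hM]
  have hD : (diagonal (((↑) : ℝ → ℂ) ∘ (√·) ∘ hM.1.eigenvalues)).PosSemidef :=
    posSemidef_diagonal_iff.mpr fun i => by
      simp only [Function.comp_apply]; exact_mod_cast Real.sqrt_nonneg _
  simpa [star_eq_conjTranspose] using
    hD.mul_mul_conjTranspose_same (hM.1.eigenvectorUnitary : Matrix (Fin n) (Fin n) ℂ)

theorem Matrix.PosSemidef.psqrt_mul_mul_psqrt (hM : M.PosSemidef) (hQ : Q.PosSemidef) :
    (psqrt Q * M * psqrt Q).PosSemidef := by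
  simpa [(posSemidef_psqrt hQ).isHermitian.eq] using hM.conjTranspose_mul_mul_same (psqrt Q)

theorem det_one_add_mul_eq_det_one_add_psqrt_mul_mul_psqrt (hQ : Q.PosSemidef)
    (M : Matrix (Fin n) (Fin n) ℂ) :
    (1 + Q * M).det = (1 + psqrt Q * M * psqrt Q).det := by
  conv_lhs => rw [← psqrt_mul_self hQ]
  rw [Matrix.mul_assoc, det_one_add_mul_comm, Matrix.mul_assoc]

theorem det_one_add_mul_pos (hQ : Q.PosSemidef) (hM : M.PosSemidef) : 0 < (1 + Q * M).det := by
  rw [det_one_add_mul_eq_det_one_add_psqrt_mul_mul_psqrt hQ]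
  have h : (1 + psqrt Q * M * psqrt Q).PosDef :=
    PosDef.add_posSemidef PosDef.one (hM.psqrt_mul_mul_psqrt hQ)
  exact h.det_pos

theorem psqrt_mul_inv_one_add_mul_psqrt (hQ : Q.PosSemidef) (M : Matrix (Fin n) (Fin n) ℂ) :
    psqrt Q * (1 + psqrt Q * M * psqrt Q)⁻¹ * psqrt Q = (1 + Q * M)⁻¹ * Q := by
  conv_rhs => rw [← psqrt_mul_self hQ]
  rw [mul_inv_one_add_mul_comm]
  simp only [Matrix.mul_assoc]

theorem Matrix.PosSemidef.inv_one_add_mul_mul (hQ : Q.PosSemidef) (hM : M.PosSemidef) :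
    ((1 + Q * M)⁻¹ * Q).PosSemidef := by
  rw [← psqrt_mul_inv_one_add_mul_psqrt hQ]
  have h : (1 + psqrt Q * M * psqrt Q).PosDef :=
    PosDef.add_posSemidef PosDef.one (hM.psqrt_mul_mul_psqrt hQ)
  exact h.inv.posSemidef.psqrt_mul_mul_psqrt hQ

theorem det_one_add_psqrt_mul_mul_psqrt (hM : M.PosSemidef) (Q : Matrix (Fin n) (Fin n) ℂ) :
    (1 + psqrt M * Q * psqrt M).det = (1 + Q * M).det := by
  rw [Matrix.mul_assoc, det_one_add_mul_comm, Matrix.mul_assoc, psqrt_mul_self hM]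

end psqrt

section FixedPoint

variable {N n : ℕ} (σ2 : ℝ) (A : Matrix (Fin N) (Fin n) ℂ) (R : Matrix (Fin N) (Fin N) ℂ)
  (T Q : Matrix (Fin n) (Fin n) ℂ)

noncomputable def Gsq (κ κt : ℝ) : Matrix (Fin n) (Fin n) ℂ :=
  (κ : ℂ) • T + (σ2 : ℂ)⁻¹ • (Aᴴ * (1 + (κt : ℂ) • R)⁻¹ * A)

noncomputable def Zmat (κ κt : ℝ) : Matrix (Fin N) (Fin N) ℂ :=
  (1 + (κt : ℂ) • R) + (σ2 : ℂ)⁻¹ • (A * ((1 + (κ : ℂ) • (Q * T))⁻¹ * Q) * Aᴴ)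

variable {σ2 A R T Q} {κ κt : ℝ}

theorem Gsq_posSemidef (hσ : 0 ≤ σ2) (hR : R.PosSemidef) (hT : T.PosSemidef) (hκ : 0 ≤ κ)
    (hκt : 0 ≤ κt) : (Gsq σ2 A R T κ κt).PosSemidef := by
  have hK : (Aᴴ * (1 + (κt : ℂ) • R)⁻¹ * A).PosSemidef :=
    (posDef_one_add_ofReal_smul hR hκt).inv.posSemidef.conjTranspose_mul_mul_same A
  exact (hT.smul (by exact_mod_cast hκ)).add (hK.smul (by simpa using hσ))

theorem Vfun_eq_log_det_one_add_mul_Gsq (hσ : 0 ≤ σ2) (hR : R.PosSemidef) (hT : T.PosSemidef)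
    (hκ : 0 ≤ κ) (hκt : 0 ≤ κt) :
    Vfun σ2 A R T Q κ κt = Real.log (1 + Q * Gsq σ2 A R T κ κt).det.re +
      Real.log (1 + (κt : ℂ) • R).det.re - σ2 * n * κ * κt := by
  rw [Vfun, Gmat, ← Gsq, det_one_add_psqrt_mul_mul_psqrt (Gsq_posSemidef hσ hR hT hκ hκt)]

theorem hasDerivAt_Vfun_fst (hσ : 0 ≤ σ2) (hR : R.PosSemidef) (hT : T.PosSemidef)
    (hQ : Q.PosSemidef) (hκ : 0 < κ) (hκt : 0 ≤ κt) :
    HasDerivAt (fun x => Vfun σ2 A R T Q x κt)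
      (((1 + Q * Gsq σ2 A R T κ κt)⁻¹ * (Q * T)).trace.re - σ2 * n * κt) κ := by
  set X₀ : Matrix (Fin n) (Fin n) ℂ := 1 + (σ2 : ℂ)⁻¹ • (Q * (Aᴴ * (1 + (κt : ℂ) • R)⁻¹ * A))
  have haffine : ∀ x : ℝ, 1 + Q * Gsq σ2 A R T x κt = X₀ + (x : ℂ) • (Q * T) := fun x => by
    simp only [Gsq, X₀, Matrix.mul_add, Matrix.mul_smul]
    abel
  have hV : (fun x => Vfun σ2 A R T Q x κt) =ᶠ[nhds κ] fun x =>
      Real.log (X₀ + (x : ℂ) • (Q * T)).det.re + Real.log (1 + (κt : ℂ) • R).det.re -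
        σ2 * n * x * κt := by
    filter_upwards [Ioi_mem_nhds hκ] with x hx
    rw [Vfun_eq_log_det_one_add_mul_Gsq hσ hR hT (le_of_lt hx) hκt, haffine]
  have hpos : 0 < (X₀ + (κ : ℂ) • (Q * T)).det := by
    rw [← haffine]
    exact det_one_add_mul_pos hQ (Gsq_posSemidef hσ hR hT hκ.le hκt)
  have hlin : HasDerivAt (fun x : ℝ => σ2 * n * x * κt) (σ2 * n * κt) κ := by
    simpa using ((hasDerivAt_id κ).const_mul (σ2 * n)).mul_const κt
  rw [haffine]
  exact (((hasDerivAt_log_re_det_add_smul _ _ κ hpos).add_const _).sub hlin).congr_of_eventuallyEq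
    hV

theorem fFPt_eq (hσ : σ2 ≠ 0) (hQ : Q.PosSemidef) :
    fFPt σ2 A R T Q κ κt =
      1 / n * (σ2⁻¹ * ((1 + Q * Gsq σ2 A R T κ κt)⁻¹ * (Q * T)).trace.re) := by
  have hσ' : (σ2 : ℂ) ≠ 0 := by exact_mod_cast hσ
  have hsum : (σ2 : ℂ) • (1 + (κ : ℂ) • TQ T Q) + psqrt Q * Aᴴ * (1 + (κt : ℂ) • R)⁻¹ * A * psqrt Q
      = (σ2 : ℂ) • (1 + psqrt Q * Gsq σ2 A R T κ κt * psqrt Q) := by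
    simp only [TQ, Gsq, Matrix.mul_add, Matrix.add_mul, Matrix.mul_smul, Matrix.smul_mul,
      smul_add, smul_smul, mul_inv_cancel₀ hσ', one_smul, Matrix.mul_assoc, add_assoc]
  have htrace : (TQ T Q * (1 + psqrt Q * Gsq σ2 A R T κ κt * psqrt Q)⁻¹).trace =
      ((1 + Q * Gsq σ2 A R T κ κt)⁻¹ * (Q * T)).trace := by
    rw [TQ, Matrix.mul_assoc (psqrt Q * T), trace_mul_comm, ← Matrix.mul_assoc,
      psqrt_mul_inv_one_add_mul_psqrt hQ, Matrix.mul_assoc]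
  rw [fFPt, hsum, inv_smul₀, Matrix.mul_smul, trace_smul, smul_eq_mul, htrace,
    ← Complex.ofReal_inv, Complex.re_ofReal_mul]

theorem det_one_add_mul_Gsq_mul_det (hP : IsUnit (1 + (κ : ℂ) • (Q * T)).det)
    (hD : IsUnit (1 + (κt : ℂ) • R).det) :
    (1 + Q * Gsq σ2 A R T κ κt).det * (1 + (κt : ℂ) • R).det =
      (1 + (κ : ℂ) • (Q * T)).det * (Zmat σ2 A R T Q κ κt).det := by
  have hG : 1 + Q * Gsq σ2 A R T κ κt =
      (1 + (κ : ℂ) • (Q * T)) + ((σ2 : ℂ)⁻¹ • (Q * Aᴴ)) * (1 + (κt : ℂ) • R)⁻¹ * A := by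
    simp only [Gsq, Matrix.mul_add, Matrix.mul_smul, Matrix.smul_mul, Matrix.mul_assoc, add_assoc]
  have hZ : Zmat σ2 A R T Q κ κt =
      (1 + (κt : ℂ) • R) + A * (1 + (κ : ℂ) • (Q * T))⁻¹ * ((σ2 : ℂ)⁻¹ • (Q * Aᴴ)) := by
    simp only [Zmat, Matrix.mul_smul, Matrix.mul_assoc]
  rw [hG, hZ, det_add_mul_inv_mul_mul_det hP hD]

theorem Zmat_posDef (hσ : 0 ≤ σ2) (hR : R.PosSemidef) (hT : T.PosSemidef) (hQ : Q.PosSemidef)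
    (hκ : 0 ≤ κ) (hκt : 0 ≤ κt) : (Zmat σ2 A R T Q κ κt).PosDef := by
  have hC : (A * ((1 + (κ : ℂ) • (Q * T))⁻¹ * Q) * Aᴴ).PosSemidef := by
    rw [← Matrix.mul_smul]
    exact (hQ.inv_one_add_mul_mul (hT.smul (by exact_mod_cast hκ))).mul_mul_conjTranspose_same A
  exact PosDef.add_posSemidef (posDef_one_add_ofReal_smul hR hκt) (hC.smul (by simpa using hσ))

theorem Vfun_eq_log_det_Zmat (hσ : 0 ≤ σ2) (hR : R.PosSemidef) (hT : T.PosSemidef)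
    (hQ : Q.PosSemidef) (hκ : 0 ≤ κ) (hκt : 0 ≤ κt) :
    Vfun σ2 A R T Q κ κt = Real.log (1 + (κ : ℂ) • (Q * T)).det.re +
      Real.log (Zmat σ2 A R T Q κ κt).det.re - σ2 * n * κ * κt := by
  have hP : 0 < (1 + (κ : ℂ) • (Q * T)).det := by
    rw [← Matrix.mul_smul]
    exact det_one_add_mul_pos hQ (hT.smul (by exact_mod_cast hκ))
  have hD := (posDef_one_add_ofReal_smul hR hκt).det_pos
  rw [Vfun_eq_log_det_one_add_mul_Gsq hσ hR hT hκ hκt,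
    ← Complex.log_re_mul_of_pos (det_one_add_mul_pos hQ (Gsq_posSemidef hσ hR hT hκ hκt)) hD,
    det_one_add_mul_Gsq_mul_det (isUnit_iff_ne_zero.mpr hP.ne') (isUnit_iff_ne_zero.mpr hD.ne'),
    Complex.log_re_mul_of_pos hP (Zmat_posDef hσ hR hT hQ hκ hκt).det_pos]

theorem hasDerivAt_Vfun_snd (hσ : 0 ≤ σ2) (hR : R.PosSemidef) (hT : T.PosSemidef)
    (hQ : Q.PosSemidef) (hκ : 0 ≤ κ) (hκt : 0 < κt) :
    HasDerivAt (fun x => Vfun σ2 A R T Q κ x)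
      (((Zmat σ2 A R T Q κ κt)⁻¹ * R).trace.re - σ2 * n * κ) κt := by
  set Z₀ : Matrix (Fin N) (Fin N) ℂ :=
    1 + (σ2 : ℂ)⁻¹ • (A * ((1 + (κ : ℂ) • (Q * T))⁻¹ * Q) * Aᴴ)
  have haffine : ∀ x : ℝ, Zmat σ2 A R T Q κ x = Z₀ + (x : ℂ) • R := fun x => by
    simp only [Zmat, Z₀]
    abel
  have hV : (fun x => Vfun σ2 A R T Q κ x) =ᶠ[nhds κt] fun x =>
      Real.log (1 + (κ : ℂ) • (Q * T)).det.re + Real.log (Z₀ + (x : ℂ) • R).det.re -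
        σ2 * n * κ * x := by
    filter_upwards [Ioi_mem_nhds hκt] with x hx
    rw [Vfun_eq_log_det_Zmat hσ hR hT hQ hκ (le_of_lt hx), haffine]
  have hpos : 0 < (Z₀ + (κt : ℂ) • R).det := by
    rw [← haffine]
    exact (Zmat_posDef hσ hR hT hQ hκ hκt.le).det_pos
  have hlin : HasDerivAt (fun x : ℝ => σ2 * n * κ * x) (σ2 * n * κ) κt := by
    simpa using (hasDerivAt_id κt).const_mul (σ2 * n * κ)
  rw [haffine]
  exact (((hasDerivAt_log_re_det_add_smul _ _ κt hpos).const_add _).sub hlin).congr_of_eventuallyEq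
    hV

theorem fFP_eq (hσ : σ2 ≠ 0) (hQ : Q.PosSemidef) :
    fFP σ2 A R T Q κ κt = 1 / n * (σ2⁻¹ * ((Zmat σ2 A R T Q κ κt)⁻¹ * R).trace.re) := by
  have hσ' : (σ2 : ℂ) ≠ 0 := by exact_mod_cast hσ
  have hpush : psqrt Q * (1 + (κ : ℂ) • TQ T Q)⁻¹ * psqrt Q = (1 + (κ : ℂ) • (Q * T))⁻¹ * Q := by
    simpa only [TQ, Matrix.mul_smul, Matrix.smul_mul] using
      psqrt_mul_inv_one_add_mul_psqrt hQ ((κ : ℂ) • T)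
  have hsum : (σ2 : ℂ) • (1 + (κt : ℂ) • R) + A * psqrt Q * (1 + (κ : ℂ) • TQ T Q)⁻¹ * psqrt Q * Aᴴ
      = (σ2 : ℂ) • Zmat σ2 A R T Q κ κt := by
    rw [Zmat, ← hpush]
    simp only [smul_add, smul_smul, mul_inv_cancel₀ hσ', one_smul, Matrix.mul_assoc]
  rw [fFP, hsum, inv_smul₀, Matrix.mul_smul, trace_smul, smul_eq_mul, trace_mul_comm R,
    ← Complex.ofReal_inv, Complex.re_ofReal_mul]

end FixedPoint

/-- If `(δ, δ̃)` solves the fixed-point system `δ = f(δ,δ̃,Q̃)`, `δ̃ = f̃(δ,δ̃,Q̃)`,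
then the partial derivatives of `V(·,·,Q̃)` vanish at `(δ, δ̃)`. -/
theorem Vfun_deriv_vanish_at_fixed_point {N n : ℕ} (σ2 : ℝ) (hσ : 0 < σ2)
    (A : Matrix (Fin N) (Fin n) ℂ) (R : Matrix (Fin N) (Fin N) ℂ)
    (T Q : Matrix (Fin n) (Fin n) ℂ)
    (hR : R.PosSemidef) (hT : T.PosSemidef) (hQ : Q.PosDef)
    (δ δt : ℝ) (hδ : 0 < δ) (hδt : 0 < δt)
    (hfix : δ = fFP σ2 A R T Q δ δt) (hfixt : δt = fFPt σ2 A R T Q δ δt) :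
    HasDerivAt (fun x => Vfun σ2 A R T Q x δt) 0 δ ∧
    HasDerivAt (fun x => Vfun σ2 A R T Q δ x) 0 δt := by
  have hn : (n : ℝ) ≠ 0 := by
    intro h0
    rw [fFP, h0, div_zero, zero_mul] at hfix
    exact hδ.ne' hfix
  rw [fFPt_eq hσ.ne' hQ.posSemidef] at hfixt
  rw [fFP_eq hσ.ne' hQ.posSemidef] at hfix
  constructor
  · have htrace : ((1 + Q * Gsq σ2 A R T δ δt)⁻¹ * (Q * T)).trace.re = σ2 * n * δt := by
      field_simp at hfixt
      linarith
    have hderiv := hasDerivAt_Vfun_fst (A := A) hσ.le hR hT hQ.posSemidef hδ hδt.le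
    rwa [htrace, sub_self] at hderiv
  · have htrace : ((Zmat σ2 A R T Q δ δt)⁻¹ * R).trace.re = σ2 * n * δ := by
      field_simp at hfix
      linarith
    have hderiv := hasDerivAt_Vfun_snd (A := A) hσ.le hR hT hQ.posSemidef hδ.le hδt
    rwa [htrace, sub_self] at hderiv
end

section
/- Waterfilling solution: let G be a positive definite Hermitian n×n matrix with eigendecomposition G² = V D V^H, D = diag(d₁,…,d_n) with d_i > 0. The maximizer over C_1 of U(Q̃) = log det(I + G Q̃ G) is Q̃* = V diag(q₁,…,q_n) V^H where q_i = max(μ − 1/d_i, 0) and μ is chosen so that (1/n)·Σ q_i = 1. -/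
/-!
In the eigenbasis of `G²` we have `G = V S Vᴴ` with `S = diag √dᵢ`, so
`det (1 + G Q G) = det (1 + S Q' S)` with `Q' = Vᴴ Q V`, which ranges over `C₁` as `Q` does.
For a positive definite `B` and any weights `cᵢ > 0`, applying `log x ≤ x - 1` to the
eigenvalues of `C^(-1/2) B C^(-1/2)` gives `log det B ≤ ∑ (log cᵢ + Bᵢᵢ / cᵢ - 1)`.
With `cᵢ = 1 + dᵢ qᵢ`, so that `∑ log cᵢ` is the value at the waterfilling point, this leaves
the scalar inequality `∑ (1 + dᵢ xᵢ) / cᵢ ≤ n` for the diagonal `xᵢ = Q'ᵢᵢ ≥ 0`, `∑ xᵢ = n`: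
the slope `dᵢ / cᵢ` equals `1 / μ` where `qᵢ > 0` and is at most `1 / μ` where `qᵢ = 0`.
-/

open Matrix
open scoped ComplexOrder

/-- `C₁`: n×n positive semidefinite Hermitian matrices with `(1/n)·Tr(Q̃) = 1`. -/
def C1 (n : ℕ) : Set (Matrix (Fin n) (Fin n) ℂ) :=
  {Q | Q.PosSemidef ∧ Q.trace = (n : ℂ)}

noncomputable def waterfill (μ d : ℝ) : ℝ := max (μ - 1 / d) 0

lemma waterfill_nonneg (μ d : ℝ) : 0 ≤ waterfill μ d := le_max_right _ _

lemma pos_of_sum_waterfill_pos {ι : Type*} [Fintype ι] {μ : ℝ} {d : ι → ℝ}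
    (hd : ∀ i, 0 < d i) (h : 0 < ∑ i, waterfill μ (d i)) : 0 < μ := by
  by_contra! hμ
  have hzero : ∀ i, waterfill μ (d i) = 0 := fun i =>
    max_eq_right (by linarith [one_div_pos.mpr (hd i)])
  simp [hzero] at h

lemma div_one_add_mul_waterfill_le {μ d x : ℝ} (hμ : 0 < μ) (hd : 0 < d) (hx : 0 ≤ x) :
    (1 + d * x) / (1 + d * waterfill μ d) ≤ 1 + (x - waterfill μ d) / μ := by
  rcases le_total (μ - 1 / d) 0 with h | h
  · have hdμ : d * μ ≤ 1 := by
      have := (le_div_iff₀ hd).mp (by linarith : μ ≤ 1 / d)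
      linarith
    rw [waterfill, max_eq_right h, mul_zero, add_zero, div_one, sub_zero, add_le_add_iff_left,
      le_div_iff₀ hμ]
    nlinarith
  · have hc : 1 + d * (μ - 1 / d) = d * μ := by field_simp; ring
    rw [waterfill, max_eq_left h, hc]
    apply le_of_eq
    field_simp
    ring

lemma sum_div_one_add_mul_waterfill_le {ι : Type*} [Fintype ι] {μ : ℝ} (hμ : 0 < μ)
    {d x : ι → ℝ} (hd : ∀ i, 0 < d i) (hx : ∀ i, 0 ≤ x i)
    (hsum : ∑ i, x i = ∑ i, waterfill μ (d i)) :
    ∑ i, (1 + d i * x i) / (1 + d i * waterfill μ (d i)) ≤ Fintype.card ι :=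
  calc _ ≤ ∑ i, (1 + (x i - waterfill μ (d i)) / μ) :=
        Finset.sum_le_sum fun i _ => div_one_add_mul_waterfill_le hμ (hd i) (hx i)
    _ = Fintype.card ι := by
        rw [Finset.sum_add_distrib, ← Finset.sum_div, Finset.sum_sub_distrib, hsum]
        simp

namespace Matrix

section UnitaryConj

variable {ι R : Type*} [Fintype ι] [DecidableEq ι] [CommRing R] [StarRing R] {V : Matrix ι ι R}

lemma conjTranspose_mul_self_of_mem_unitaryGroup (hV : V ∈ unitaryGroup ι R) : Vᴴ * V = 1 :=
  mem_unitaryGroup_iff'.mp hV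

lemma mul_conjTranspose_self_of_mem_unitaryGroup (hV : V ∈ unitaryGroup ι R) : V * Vᴴ = 1 :=
  mem_unitaryGroup_iff.mp hV

lemma trace_unitary_conj (hV : V ∈ unitaryGroup ι R) (X : Matrix ι ι R) :
    (V * X * Vᴴ).trace = X.trace := by
  rw [trace_mul_cycle, conjTranspose_mul_self_of_mem_unitaryGroup hV, one_mul]

lemma trace_unitary_conj' (hV : V ∈ unitaryGroup ι R) (X : Matrix ι ι R) :
    (Vᴴ * X * V).trace = X.trace := by
  rw [trace_mul_cycle, mul_conjTranspose_self_of_mem_unitaryGroup hV, one_mul]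

lemma det_unitary_conj (hV : V ∈ unitaryGroup ι R) (X : Matrix ι ι R) :
    (V * X * Vᴴ).det = X.det := by
  rw [det_mul_right_comm, mul_conjTranspose_self_of_mem_unitaryGroup hV, one_mul]

lemma unitary_conj_mul_unitary_conj (hV : V ∈ unitaryGroup ι R) (X Y : Matrix ι ι R) :
    V * X * Vᴴ * (V * Y * Vᴴ) = V * (X * Y) * Vᴴ := by
  calc V * X * Vᴴ * (V * Y * Vᴴ) = V * (X * (Vᴴ * V) * Y) * Vᴴ := by
        simp only [Matrix.mul_assoc]
    _ = V * (X * Y) * Vᴴ := by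
        rw [conjTranspose_mul_self_of_mem_unitaryGroup hV, Matrix.mul_one]

lemma conjTranspose_mul_unitary_conj_mul (hV : V ∈ unitaryGroup ι R) (X : Matrix ι ι R) :
    Vᴴ * (V * X * Vᴴ) * V = X := by
  calc Vᴴ * (V * X * Vᴴ) * V = Vᴴ * V * X * (Vᴴ * V) := by simp only [Matrix.mul_assoc]
    _ = X := by rw [conjTranspose_mul_self_of_mem_unitaryGroup hV, Matrix.one_mul, Matrix.mul_one]

lemma one_add_unitary_conj_mul_mul (hV : V ∈ unitaryGroup ι R) (S Q : Matrix ι ι R) :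
    1 + V * S * Vᴴ * Q * (V * S * Vᴴ) = V * (1 + S * (Vᴴ * Q * V) * S) * Vᴴ := by
  rw [Matrix.mul_add, Matrix.add_mul, Matrix.mul_one, mul_conjTranspose_self_of_mem_unitaryGroup hV]
  simp only [Matrix.mul_assoc]

end UnitaryConj

variable {ι 𝕜 : Type*} [Fintype ι] [DecidableEq ι] [RCLike 𝕜]

open MatrixOrder in
lemma PosSemidef.eq_unitary_conj_diagonal_sqrt {G V : Matrix ι ι 𝕜} (hG : G.PosSemidef)
    (hV : V ∈ unitaryGroup ι 𝕜) {d : ι → ℝ} (hd : ∀ i, 0 ≤ d i)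
    (h : G * G = V * diagonal (fun i => (d i : 𝕜)) * Vᴴ) :
    G = V * diagonal (fun i => ((√(d i) : ℝ) : 𝕜)) * Vᴴ := by
  have hS : (V * diagonal (fun i => ((√(d i) : ℝ) : 𝕜)) * Vᴴ).PosSemidef :=
    PosSemidef.mul_mul_conjTranspose_same
      (PosSemidef.diagonal fun i => RCLike.ofReal_nonneg.mpr (Real.sqrt_nonneg _)) V
  refine (CFC.sq_eq_sq_iff G _ hG.nonneg hS.nonneg).mp ?_
  rw [sq, sq, h, unitary_conj_mul_unitary_conj hV, diagonal_mul_diagonal]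
  simp only [← RCLike.ofReal_mul, Real.mul_self_sqrt (hd _)]

open RCLike

lemma PosDef.log_re_det_le_re_trace_sub_card {M : Matrix ι ι 𝕜} (hM : M.PosDef) :
    Real.log (re M.det) ≤ re M.trace - Fintype.card ι := by
  rw [hM.isHermitian.det_eq_prod_eigenvalues, hM.isHermitian.trace_eq_sum_eigenvalues,
    ← ofReal_prod, ← ofReal_sum, ofReal_re, ofReal_re,
    Real.log_prod fun i _ => (hM.eigenvalues_pos i).ne']
  calc ∑ i, Real.log (hM.isHermitian.eigenvalues i)
      ≤ ∑ i, (hM.isHermitian.eigenvalues i - 1) :=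
        Finset.sum_le_sum fun i _ => Real.log_le_sub_one_of_pos (hM.eigenvalues_pos i)
    _ = _ := by simp [Finset.sum_sub_distrib]

lemma PosDef.log_re_det_le_sum_log_add_diag_div {M : Matrix ι ι 𝕜} (hM : M.PosDef) {c : ι → ℝ}
    (hc : ∀ i, 0 < c i) :
    Real.log (re M.det) ≤ ∑ i, (Real.log (c i) + re (M i i) / c i - 1) := by
  set P : Matrix ι ι 𝕜 := diagonal fun i => ((√(c i))⁻¹ : ℝ)
  have hsq : ∀ i, (√(c i))⁻¹ * (√(c i))⁻¹ = (c i)⁻¹ := fun i => by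
    rw [← mul_inv, Real.mul_self_sqrt (hc i).le]
  have hPM : (Pᴴ * M * P).PosDef := hM.conjTranspose_mul_mul_same <|
    mulVec_injective_iff_isUnit.mpr <| isUnit_diagonal.mpr <| Pi.isUnit_iff.mpr fun i => by
      simp [(Real.sqrt_pos.mpr (hc i)).ne']
  have hdet : re (Pᴴ * M * P).det = (∏ i, c i)⁻¹ * re M.det := by
    rw [det_mul, det_mul, det_conjTranspose, mul_right_comm, det_diagonal, ← ofReal_prod,
      star_def, conj_ofReal, ← ofReal_mul, re_ofReal_mul, ← Finset.prod_mul_distrib,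
      ← Finset.prod_inv_distrib]
    simp only [hsq]
  have hdiag : ∀ i, re ((Pᴴ * M * P) i i) = re (M i i) / c i := fun i => by
    simp only [P, diagonal_conjTranspose, diagonal_mul, mul_diagonal, Pi.star_apply,
      star_def, conj_ofReal]
    rw [mul_right_comm, ← ofReal_mul, hsq, re_ofReal_mul, inv_mul_eq_div]
  have hMdet : 0 < re M.det := (pos_iff.mp hM.det_pos).1
  have hprod : 0 < ∏ i, c i := Finset.prod_pos fun i _ => hc i
  have key := hPM.log_re_det_le_re_trace_sub_card
  rw [hdet, Real.log_mul (inv_pos.mpr hprod).ne' hMdet.ne', Real.log_inv,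
    Real.log_prod fun i _ => (hc i).ne', trace, map_sum] at key
  simp only [diag_apply, hdiag] at key
  simp only [Finset.sum_sub_distrib, Finset.sum_add_distrib, Finset.sum_const, Finset.card_univ,
    nsmul_eq_mul, mul_one]
  linarith

lemma PosSemidef.posDef_one_add_diagonal_mul_mul_diagonal {Q : Matrix ι ι 𝕜}
    (hQ : Q.PosSemidef) (s : ι → ℝ) :
    (1 + diagonal (fun i => (s i : 𝕜)) * Q * diagonal (fun i => (s i : 𝕜))).PosDef := by
  refine PosDef.one.add_posSemidef ?_
  have hS : (diagonal fun i => (s i : 𝕜))ᴴ = diagonal fun i => (s i : 𝕜) := by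
    simp [Pi.star_def]
  simpa [hS] using hQ.conjTranspose_mul_mul_same (diagonal fun i => (s i : 𝕜))

lemma re_one_add_diagonal_mul_mul_diagonal_apply_self (s : ι → ℝ) (Q : Matrix ι ι 𝕜) (i : ι) :
    re ((1 + diagonal (fun i => (s i : 𝕜)) * Q * diagonal (fun i => (s i : 𝕜))) i i) =
      1 + s i * s i * re (Q i i) := by
  simp only [add_apply, one_apply_eq, diagonal_mul, mul_diagonal, map_add, one_re]
  rw [mul_right_comm, ← ofReal_mul, re_ofReal_mul]

lemma log_re_det_one_add_diagonal_mul_mul_diagonal_le {μ : ℝ} (hμ : 0 < μ) {d : ι → ℝ}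
    (hd : ∀ i, 0 < d i) {Q : Matrix ι ι 𝕜} (hQ : Q.PosSemidef)
    (htr : re Q.trace = ∑ i, waterfill μ (d i)) :
    Real.log (re (1 + diagonal (fun i => ((√(d i) : ℝ) : 𝕜)) * Q *
        diagonal (fun i => ((√(d i) : ℝ) : 𝕜))).det) ≤
      Real.log (re (1 + diagonal (fun i => ((√(d i) : ℝ) : 𝕜)) *
        diagonal (fun i => (waterfill μ (d i) : 𝕜)) *
        diagonal (fun i => ((√(d i) : ℝ) : 𝕜))).det) := by
  set S : Matrix ι ι 𝕜 := diagonal fun i => ((√(d i) : ℝ) : 𝕜)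
  set c : ι → ℝ := fun i => 1 + d i * waterfill μ (d i)
  have hc : ∀ i, 0 < c i := fun i => by
    have := mul_nonneg (hd i).le (waterfill_nonneg μ (d i))
    positivity
  have hsqrt : ∀ i, √(d i) * √(d i) = d i := fun i => Real.mul_self_sqrt (hd i).le
  have hvalue : 1 + S * diagonal (fun i => (waterfill μ (d i) : 𝕜)) * S =
      diagonal fun i => (c i : 𝕜) := by
    simp only [S, c, diagonal_mul_diagonal, ← diagonal_one, diagonal_add, ← ofReal_mul,
      mul_right_comm (√(d _)) _ (√(d _)), hsqrt, ofReal_add, ofReal_one]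
  have hx : ∀ i, 0 ≤ re (Q i i) := fun i => (nonneg_iff.mp hQ.diag_nonneg).1
  have hxsum : ∑ i, re (Q i i) = ∑ i, waterfill μ (d i) := by
    rw [← htr, trace, map_sum]
    rfl
  rw [hvalue, det_diagonal, ← ofReal_prod, ofReal_re, Real.log_prod fun i _ => (hc i).ne']
  calc Real.log (re (1 + S * Q * S).det)
      ≤ ∑ i, (Real.log (c i) + re ((1 + S * Q * S) i i) / c i - 1) :=
        (hQ.posDef_one_add_diagonal_mul_mul_diagonal _).log_re_det_le_sum_log_add_diag_div hc
    _ = ∑ i, Real.log (c i) + (∑ i, (1 + d i * re (Q i i)) / c i - Fintype.card ι) := by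
        simp only [S, re_one_add_diagonal_mul_mul_diagonal_apply_self, hsqrt,
          Finset.sum_sub_distrib, Finset.sum_add_distrib, Finset.sum_const, Finset.card_univ,
          nsmul_eq_mul, mul_one]
        ring
    _ ≤ ∑ i, Real.log (c i) := by
        linarith [sum_div_one_add_mul_waterfill_le hμ hd hx hxsum]

end Matrix

/-- Waterfilling solution: if `G` is positive definite Hermitian with
`G² = V·diag(d₁,…,d_n)·Vᴴ`, `d_i > 0`, `V` unitary, and `μ` satisfies the
normalization `(1/n)·Σᵢ max(μ − 1/dᵢ, 0) = 1`, then
`Q̃* = V·diag(q₁,…,q_n)·Vᴴ` with `qᵢ = max(μ − 1/dᵢ, 0)` maximizes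
`Q̃ ↦ log det(I + G Q̃ G)` over `C₁`. -/
theorem waterfilling_solution {n : ℕ} (hn : 0 < n)
    (G : Matrix (Fin n) (Fin n) ℂ) (hG : G.PosDef)
    (V : Matrix (Fin n) (Fin n) ℂ) (hV : V ∈ Matrix.unitaryGroup (Fin n) ℂ)
    (d : Fin n → ℝ) (hd : ∀ i, 0 < d i)
    (hdecomp : G * G = V * Matrix.diagonal (fun i => ((d i : ℝ) : ℂ)) * Vᴴ)
    (μ : ℝ) (hμ : ((1 : ℝ) / n) * ∑ i, max (μ - 1 / d i) 0 = 1) :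
    (V * Matrix.diagonal (fun i => ((max (μ - 1 / d i) 0 : ℝ) : ℂ)) * Vᴴ) ∈ C1 n ∧
    IsMaxOn (fun Q => Real.log ((1 + G * Q * G).det.re)) (C1 n)
      (V * Matrix.diagonal (fun i => ((max (μ - 1 / d i) 0 : ℝ) : ℂ)) * Vᴴ) := by
  have hsum : ∑ i, waterfill μ (d i) = n := by
    field_simp at hμ
    exact hμ
  have hμ0 : 0 < μ := pos_of_sum_waterfill_pos hd (hsum ▸ Nat.cast_pos.mpr hn)
  have hGV := hG.posSemidef.eq_unitary_conj_diagonal_sqrt hV (fun i => (hd i).le) hdecomp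
  have hmem : V * diagonal (fun i => (waterfill μ (d i) : ℂ)) * Vᴴ ∈ C1 n :=
    ⟨PosSemidef.mul_mul_conjTranspose_same
      (PosSemidef.diagonal fun i => Complex.zero_le_real.mpr (waterfill_nonneg μ (d i))) V,
      by rw [trace_unitary_conj hV, trace_diagonal]; exact_mod_cast hsum⟩
  refine ⟨hmem, isMaxOn_iff.mpr fun Q hQ => ?_⟩
  rw [hGV, one_add_unitary_conj_mul_mul hV, one_add_unitary_conj_mul_mul hV, det_unitary_conj hV,
    det_unitary_conj hV, conjTranspose_mul_unitary_conj_mul hV]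
  refine log_re_det_one_add_diagonal_mul_mul_diagonal_le hμ0 hd
    (hQ.1.conjTranspose_mul_mul_same V) ?_
  rw [trace_unitary_conj' hV, hQ.2, hsum]
  simp
end
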